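/- Let g be a Lie algebra with automorphism μ of order r and ξ a primitive r-th root of unity. Suppose e, f, h ∈ g satisfy [e,f] = h, [h,e] = 2e, [h,f] = -2f, [e, μ^i(e)] = [f, μ^i(f)] = [h, μ^i(h)] = 0 and [e, μ^i(f)] = 0 for 1 ≤ i ≤ r-1. Define e^{(j)} = Σ_{i=1}^{r} μ^i(ξ^{(r-i)j} e), f^{(j)} = Σ_{i=1}^{r} μ^i(ξ^{(r-i)j} f), h^{(j)} = Σ_{i=1}^{r} μ^i(ξ^{(r-i)j} h). Then [e^{(i)}, f^{(j)}] = h^{(i+j)}, [h^{(i)}, e^{(j)}] = 2 e^{(i+j)}, and [h^{(i)}, f^{(j)}] = -2 f^{(i+j)}, where superscripts are taken mod r. -/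
import Mathlib


noncomputable section

variable {g : Type*} [LieRing g] [LieAlgebra ℂ g]

/-- `e^{(j)} = Σ_{i=1}^{r} μ^i (ξ^{(r-i)j} e)`. -/
def twistedComp (r : ℕ) (μ : Module.End ℂ g) (ξ : ℂ) (e : g) (j : ℕ) : g :=
  ∑ i ∈ Finset.Icc 1 r, (ξ ^ ((r - i) * j)) • ((μ ^ i) e)

private lemma powLie_aux (μ : Module.End ℂ g)
    (hμLie : ∀ x y : g, μ ⁅x, y⁆ = ⁅μ x, μ y⁆) :
    ∀ n (x y : g), (μ ^ n) ⁅x, y⁆ = ⁅(μ ^ n) x, (μ ^ n) y⁆ := by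
  intro n
  induction n with
  | zero => simp
  | succ n ih =>
      intro x y
      simp only [pow_succ', Module.End.mul_apply, ih, hμLie]

private lemma powInj_aux (r : ℕ) (hr : 0 < r) (μ : Module.End ℂ g) (hμord : μ ^ r = 1)
    (m : ℕ) : Function.Injective (μ ^ m) := by
  have h1 : Function.Injective μ := by
    intro a b hab
    have key : μ ^ (r - 1) * μ = 1 := by
      rw [← pow_succ, Nat.sub_add_cancel hr, hμord]
    have := congrArg (μ ^ (r - 1)) hab
    rw [← Module.End.mul_apply, ← Module.End.mul_apply, key] at this
    simpa using this
  intro a b hab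
  rw [Module.End.pow_apply, Module.End.pow_apply] at hab
  exact h1.iterate m hab

private lemma rev_aux (r : ℕ) (hr : 0 < r) (μ : Module.End ℂ g)
    (hμLie : ∀ x y : g, μ ⁅x, y⁆ = ⁅μ x, μ y⁆) (hμord : μ ^ r = 1)
    (x y : g) (H : ∀ k, 1 ≤ k → k ≤ r - 1 → ⁅x, (μ ^ k) y⁆ = 0) :
    ∀ k, 1 ≤ k → k ≤ r - 1 → ⁅y, (μ ^ k) x⁆ = 0 := by
  intro k hk1 hk2
  apply powInj_aux r hr μ hμord (r - k)
  rw [powLie_aux μ hμLie, map_zero]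
  have hx : (μ ^ (r - k)) ((μ ^ k) x) = x := by
    rw [← Module.End.mul_apply, ← pow_add, Nat.sub_add_cancel (le_of_lt (by omega)), hμord]
    simp
  rw [hx, ← lie_skew, H (r - k) (by omega) (by omega), neg_zero]

private lemma offdiag_aux (r : ℕ) (hr : 0 < r) (μ : Module.End ℂ g)
    (hμLie : ∀ x y : g, μ ⁅x, y⁆ = ⁅μ x, μ y⁆) (hμord : μ ^ r = 1)
    (x y : g) (H : ∀ k, 1 ≤ k → k ≤ r - 1 → ⁅x, (μ ^ k) y⁆ = 0) :
    ∀ a b, a ∈ Finset.Icc 1 r → b ∈ Finset.Icc 1 r → a ≠ b →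
      ⁅(μ ^ a) x, (μ ^ b) y⁆ = 0 := by
  intro a b ha hb hne
  simp only [Finset.mem_Icc] at ha hb
  rcases lt_or_gt_of_ne hne with hlt | hgt
  · have hb' : (μ ^ a) ((μ ^ (b - a)) y) = (μ ^ b) y := by
      rw [← Module.End.mul_apply, ← pow_add, show a + (b - a) = b by omega]
    rw [← hb', ← powLie_aux μ hμLie, H (b - a) (by omega) (by omega), map_zero]
  · have ha' : (μ ^ b) ((μ ^ (a - b)) x) = (μ ^ a) x := by
      rw [← Module.End.mul_apply, ← pow_add, show b + (a - b) = a by omega]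
    rw [← ha', ← powLie_aux μ hμLie, ← lie_skew,
      rev_aux r hr μ hμLie hμord x y H (a - b) (by omega) (by omega), neg_zero, map_zero]

private lemma sum_lie' {ι : Type*} (s : Finset ι) (f : ι → g) (y : g) :
    ⁅∑ i ∈ s, f i, y⁆ = ∑ i ∈ s, ⁅f i, y⁆ := by
  induction s using Finset.cons_induction with
  | empty => simp
  | cons a s ha ih => simp [Finset.sum_cons, add_lie, ih]

private lemma lie_sum' {ι : Type*} (s : Finset ι) (x : g) (f : ι → g) :
    ⁅x, ∑ i ∈ s, f i⁆ = ∑ i ∈ s, ⁅x, f i⁆ := by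
  induction s using Finset.cons_induction with
  | empty => simp
  | cons a s ha ih => simp [Finset.sum_cons, lie_add, ih]

private lemma twisted_bracket_aux (r : ℕ) (hr : 0 < r) (μ : Module.End ℂ g)
    (hμLie : ∀ x y : g, μ ⁅x, y⁆ = ⁅μ x, μ y⁆) (hμord : μ ^ r = 1)
    (ξ : ℂ) (x y z : g) (c : ℂ) (hxy : ⁅x, y⁆ = c • z)
    (H : ∀ k, 1 ≤ k → k ≤ r - 1 → ⁅x, (μ ^ k) y⁆ = 0) (i j : ℕ) :
    ⁅twistedComp r μ ξ x i, twistedComp r μ ξ y j⁆ = c • twistedComp r μ ξ z (i + j) := by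
  unfold twistedComp
  rw [sum_lie', Finset.smul_sum]
  apply Finset.sum_congr rfl
  intro a ha
  rw [smul_lie, lie_sum']
  rw [Finset.sum_eq_single_of_mem a ha]
  · rw [lie_smul, ← powLie_aux μ hμLie, hxy, map_smul]
    rw [smul_smul, smul_smul, smul_smul, Nat.mul_add, pow_add]
    congr 1
    ring
  · intro b hb hne
    rw [lie_smul, offdiag_aux r hr μ hμLie hμord x y H a b ha hb hne.symm, smul_zero]

/-- for an sl₂-triple `e, f, h` whose nontrivial `μ`-translates commute with
it as specified, the twisted components satisfy
`[e^{(i)}, f^{(j)}] = h^{(i+j)}`, `[h^{(i)}, e^{(j)}] = 2 e^{(i+j)}`,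
`[h^{(i)}, f^{(j)}] = -2 f^{(i+j)}` (indices mod `r`). -/
theorem twistedComp_sl2_relations
    (r : ℕ) (hr : 0 < r) (μ : Module.End ℂ g)
    (hμLie : ∀ x y : g, μ ⁅x, y⁆ = ⁅μ x, μ y⁆)
    (hμord : μ ^ r = 1)
    (ξ : ℂ) (hξ : IsPrimitiveRoot ξ r)
    (e f h : g)
    (hef : ⁅e, f⁆ = h) (hhe : ⁅h, e⁆ = (2 : ℂ) • e) (hhf : ⁅h, f⁆ = (-2 : ℂ) • f)
    (hee : ∀ i, 1 ≤ i → i ≤ r - 1 → ⁅e, (μ ^ i) e⁆ = 0)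
    (hff : ∀ i, 1 ≤ i → i ≤ r - 1 → ⁅f, (μ ^ i) f⁆ = 0)
    (hhh : ∀ i, 1 ≤ i → i ≤ r - 1 → ⁅h, (μ ^ i) h⁆ = 0)
    (hef' : ∀ i, 1 ≤ i → i ≤ r - 1 → ⁅e, (μ ^ i) f⁆ = 0) :
    ∀ i j : ℕ,
      ⁅twistedComp r μ ξ e i, twistedComp r μ ξ f j⁆ = twistedComp r μ ξ h (i + j) ∧
      ⁅twistedComp r μ ξ h i, twistedComp r μ ξ e j⁆ =
        (2 : ℂ) • twistedComp r μ ξ e (i + j) ∧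
      ⁅twistedComp r μ ξ h i, twistedComp r μ ξ f j⁆ =
        (-2 : ℂ) • twistedComp r μ ξ f (i + j) := by
  have hfe : ∀ k, 1 ≤ k → k ≤ r - 1 → ⁅f, (μ ^ k) e⁆ = 0 :=
    rev_aux r hr μ hμLie hμord e f hef'
  have hhe' : ∀ k, 1 ≤ k → k ≤ r - 1 → ⁅h, (μ ^ k) e⁆ = 0 := by
    intro k hk1 hk2
    rw [← hef, lie_lie, hfe k hk1 hk2, hee k hk1 hk2, lie_zero, lie_zero, sub_zero]
  have hhf' : ∀ k, 1 ≤ k → k ≤ r - 1 → ⁅h, (μ ^ k) f⁆ = 0 := by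
    intro k hk1 hk2
    rw [← hef, lie_lie, hff k hk1 hk2, hef' k hk1 hk2, lie_zero, lie_zero, sub_zero]
  intro i j
  refine ⟨?_, ?_, ?_⟩
  · have := twisted_bracket_aux r hr μ hμLie hμord ξ e f h 1 (by rw [hef, one_smul]) hef' i j
    rwa [one_smul] at this
  · exact twisted_bracket_aux r hr μ hμLie hμord ξ h e e 2 hhe hhe' i j
  · exact twisted_bracket_aux r hr μ hμLie hμord ξ h f f (-2) hhf hhf' i j
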